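/- arXiv:1407.1153 — 3 statements merged into one kernel-verified Lean document; each statement's English description precedes it below -/
import Mathlib

section
/- For K, L ∈ K_u^p(S^n), the Euclidean Hausdorff distance between the gnomonic projections satisfies δ(g_u(K), g_u(L)) = max_{v ∈ S_u} |tan h_u(K,v) − tan h_u(L,v)|. -/
open scoped RealInnerProductSpace Pointwise
open Real

noncomputable section

/-- `Esp n` is the ambient Euclidean space `ℝ^{n+1}` containing the unit sphere `S^n`. -/
abbrev Esp (n : ℕ) : Type := EuclideanSpace ℝ (Fin (n + 1))

/-- The unit sphere `S^n ⊆ ℝ^{n+1}`. -/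
def uSphere (n : ℕ) : Set (Esp n) := {x | ‖x‖ = 1}

/-- `rad A = {λ • x : λ ≥ 0, x ∈ A}`. -/
def radSet {n : ℕ} (A : Set (Esp n)) : Set (Esp n) :=
  {y | ∃ l : ℝ, 0 ≤ l ∧ ∃ x ∈ A, y = l • x}

/-- A set `A ⊆ S^n` is spherically convex if `rad A` is convex. -/
def SphConvex {n : ℕ} (A : Set (Esp n)) : Prop := Convex ℝ (radSet A)

/-- The open hemisphere centered at `u`. -/
def openHemi {n : ℕ} (u : Esp n) : Set (Esp n) := {v | ‖v‖ = 1 ∧ 0 < ⟪u, v⟫}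

/-- The equator `S_u = {v ∈ S^n : u ⬝ v = 0}`. -/
def equator {n : ℕ} (u : Esp n) : Set (Esp n) := {v | ‖v‖ = 1 ∧ ⟪u, v⟫ = 0}

/-- Proper convex bodies contained in the open hemisphere centered at `u`:
the class `K_u^p(S^n)`. -/
def properBodies {n : ℕ} (u : Esp n) : Set (Set (Esp n)) :=
  {K | K.Nonempty ∧ IsClosed K ∧ K ⊆ openHemi u ∧ SphConvex K}

/-- All proper convex bodies `K^p(S^n)`. -/
def allProperBodies (n : ℕ) : Set (Set (Esp n)) :=
  {K | ∃ u : Esp n, ‖u‖ = 1 ∧ K ∈ properBodies u}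

/-- The gnomonic projection `g_u(v) = v/(u⬝v) − u`. -/
def gno {n : ℕ} (u v : Esp n) : Esp n := (⟪u, v⟫)⁻¹ • v - u

/-- The inverse gnomonic projection `x ↦ (x+u)/‖x+u‖`. -/
def gnoInv {n : ℕ} (u x : Esp n) : Esp n := ‖x + u‖⁻¹ • (x + u)

/-- The hyperplane `ℝ^n_u = u^⊥` of `ℝ^{n+1}`. -/
def hyper {n : ℕ} (u : Esp n) : Set (Esp n) := {x | ⟪u, x⟫ = 0}

/-- The class `K(ℝ^n_u)` of (nonempty) compact convex subsets of the hyperplane `u^⊥`. -/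
def cptCvx {n : ℕ} (u : Esp n) : Set (Set (Esp n)) :=
  {C | C.Nonempty ∧ IsCompact C ∧ Convex ℝ C ∧ C ⊆ hyper u}

/-- The spherical support function `h_u(K,v) = max {sgn(v⬝w) d(u, w|S_{u,v}) : w ∈ K}`,
where `d(u, w|S_{u,v}) = arccos ((u⬝w)/√((u⬝w)² + (v⬝w)²))`. -/
def sphSupp {n : ℕ} (u : Esp n) (K : Set (Esp n)) (v : Esp n) : ℝ :=
  sSup ((fun w => Real.sign ⟪v, w⟫ *
    Real.arccos (⟪u, w⟫ / Real.sqrt (⟪u, w⟫ ^ 2 + ⟪v, w⟫ ^ 2))) '' K)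

/-- The Euclidean support function `h(C,x) = sup {x ⬝ y : y ∈ C}`. -/
def esupp {n : ℕ} (C : Set (Esp n)) (x : Esp n) : ℝ :=
  sSup ((fun y => ⟪x, y⟫) '' C)

/-- Spherical (geodesic) distance on `S^n`. -/
def sphDist {n : ℕ} (x y : Esp n) : ℝ := Real.arccos ⟪x, y⟫

/-- The Hausdorff distance `δ_s` induced by the spherical distance. -/
def sphHaus {n : ℕ} (A B : Set (Esp n)) : ℝ :=
  sInf {r | 0 ≤ r ∧ (∀ a ∈ A, ∃ b ∈ B, sphDist a b ≤ r) ∧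
    (∀ b ∈ B, ∃ a ∈ A, sphDist a b ≤ r)}

/-- The metric `γ_u(K,L) = max_{v ∈ S_u} |h_u(K,v) − h_u(L,v)|`. -/
def gammaU {n : ℕ} (u : Esp n) (K L : Set (Esp n)) : ℝ :=
  sSup ((fun v => |sphSupp u K v - sphSupp u L v|) '' equator u)

/-- Spherical projection of `K` onto the great subsphere `V ∩ S^n`:
`K|S = (rad K | V) ∩ S^n`. -/
def sphProj {n : ℕ} (V : Submodule ℝ (Esp n)) (K : Set (Esp n)) : Set (Esp n) :=
  ((fun x => (V.orthogonalProjectionOnto x : Esp n)) '' radSet K) ∩ uSphere n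

/-- Orthogonal projection of a subset of `ℝ^{n+1}` onto a linear subspace `W`. -/
def eProj {n : ℕ} (W : Submodule ℝ (Esp n)) (C : Set (Esp n)) : Set (Esp n) :=
  (fun x => (W.orthogonalProjectionOnto x : Esp n)) '' C

/-- The spherical convex hull: the intersection of all spherically convex subsets of `S^n`
containing `A`. -/
def sphHull {n : ℕ} (A : Set (Esp n)) : Set (Esp n) :=
  ⋂₀ {B | A ⊆ B ∧ B ⊆ uSphere n ∧ SphConvex B}

/-- The set `C` of pairs of proper convex bodies contained in a common open hemisphere. -/
def pairsC (n : ℕ) : Set (Set (Esp n) × Set (Esp n)) :=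
  {p | ∃ u : Esp n, ‖u‖ = 1 ∧ p.1 ∈ properBodies u ∧ p.2 ∈ properBodies u}

/-- `u`-projection covariance of a binary operation on `K_u^p(S^n)`:
`(K|S) * (L|S) = (K*L)|S` for all great subspheres `S = V ∩ S^n` through `u`
with `0 ≤ k = dim S ≤ n − 1`. -/
def uProjCovariant {n : ℕ} (u : Esp n)
    (op : Set (Esp n) → Set (Esp n) → Set (Esp n)) : Prop :=
  ∀ V : Submodule ℝ (Esp n), u ∈ V → Module.finrank ℝ V ≤ n →
    ∀ K ∈ properBodies u, ∀ L ∈ properBodies u,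
      op (sphProj V K) (sphProj V L) = sphProj V (op K L)

/-- Projection covariance: `u`-projection covariance for every `u ∈ S^n`. -/
def projCovariantC {n : ℕ} (op : Set (Esp n) → Set (Esp n) → Set (Esp n)) : Prop :=
  ∀ u : Esp n, ‖u‖ = 1 → uProjCovariant u op

/-- Projection covariance for operations on compact convex subsets of `u^⊥`. -/
def eProjCovariant {n : ℕ} (u : Esp n)
    (op : Set (Esp n) → Set (Esp n) → Set (Esp n)) : Prop :=
  ∀ W : Submodule ℝ (Esp n), (W : Set (Esp n)) ⊆ hyper u →
    ∀ K ∈ cptCvx u, ∀ L ∈ cptCvx u,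
      op (eProj W K) (eProj W L) = eProj W (op K L)

/-!
For `v` on the equator, `⟪v, g_u(w)⟫ = ⟪v, w⟫ / ⟪u, w⟫`, and `sgn(v⬝w) d(u, w|S_{u,v})` is the
arctangent of that ratio; since `arctan` is increasing and continuous, `tan h_u(K, v)` is the
Euclidean support function of `g_u(K)` at `v`. The theorem is then the classical fact that the
Hausdorff distance of two compact convex sets in `u^⊥` is the sup-distance of their support
functions on unit vectors of `u^⊥`: one inequality is Cauchy–Schwarz, and for the other, a
point `a` at distance `d > 0` from its nearest point `b` of the convex set `B` satisfies
`⟪v, a⟫ - h(B, v) = d` for `v = (a - b)/d`.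
-/

section SupportFunction

variable {n : ℕ}

lemma inner_le_esupp {A : Set (Esp n)} (hA : IsCompact A) (v : Esp n) {a : Esp n} (ha : a ∈ A) :
    ⟪v, a⟫ ≤ esupp A v :=
  le_csSup (hA.image (continuous_const.inner continuous_id)).bddAbove (Set.mem_image_of_mem _ ha)

lemma esupp_le_esupp_add_hausdorffDist {A B : Set (Esp n)} (hA : A.Nonempty) (hB : B.Nonempty)
    (hAc : IsCompact A) (hBc : IsCompact B) {v : Esp n} (hv : ‖v‖ = 1) :
    esupp A v ≤ esupp B v + Metric.hausdorffDist A B := by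
  have hfin : Metric.hausdorffEDist A B ≠ ⊤ :=
    Metric.hausdorffEDist_ne_top_of_nonempty_of_bounded hA hB hAc.isBounded hBc.isBounded
  refine csSup_le (hA.image _) ?_
  rintro _ ⟨a, ha, rfl⟩
  obtain ⟨b, hb, hab⟩ := hBc.exists_infDist_eq_dist hB a
  have hdist : dist a b ≤ Metric.hausdorffDist A B :=
    hab ▸ Metric.infDist_le_hausdorffDist_of_mem ha hfin
  have hinner : ⟪v, a - b⟫ ≤ dist a b := by
    simpa [hv, dist_eq_norm] using real_inner_le_norm v (a - b)
  rw [inner_sub_right] at hinner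
  linarith [inner_le_esupp hBc v hb]

lemma abs_esupp_sub_le_hausdorffDist {A B : Set (Esp n)} (hA : A.Nonempty) (hB : B.Nonempty)
    (hAc : IsCompact A) (hBc : IsCompact B) {v : Esp n} (hv : ‖v‖ = 1) :
    |esupp A v - esupp B v| ≤ Metric.hausdorffDist A B := by
  rw [abs_sub_le_iff]
  constructor
  · linarith [esupp_le_esupp_add_hausdorffDist hA hB hAc hBc hv]
  · linarith [esupp_le_esupp_add_hausdorffDist hB hA hBc hAc hv,
      Metric.hausdorffDist_comm (s := A) (t := B)]

lemma exists_dist_le_of_inner_le_esupp_add {u a : Esp n} {B : Set (Esp n)} {r : ℝ}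
    (ha : a ∈ hyper u) (hB : B ∈ cptCvx u) (hr : 0 ≤ r)
    (h : ∀ v ∈ equator u, ⟪v, a⟫ ≤ esupp B v + r) : ∃ b ∈ B, dist a b ≤ r := by
  obtain ⟨hBne, hBc, hBv, hBh⟩ := hB
  obtain ⟨b, hb, hmin⟩ := exists_norm_eq_iInf_of_complete_convex hBne hBc.isComplete hBv a
  have hobtuse := (norm_eq_iInf_iff_real_inner_le_zero hBv hb).1 hmin
  refine ⟨b, hb, ?_⟩
  rcases eq_or_ne a b with rfl | hab
  · simpa using hr
  have hpos : 0 < ‖a - b‖ := norm_pos_iff.2 (sub_ne_zero.2 hab)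
  set v := ‖a - b‖⁻¹ • (a - b) with hv_def
  have hv : v ∈ equator u := by
    refine ⟨by rw [norm_smul, norm_inv, norm_norm, inv_mul_cancel₀ hpos.ne'], ?_⟩
    rw [real_inner_smul_right, inner_sub_right, ha, hBh hb, sub_zero, mul_zero]
  have hsupp : esupp B v ≤ ⟪v, b⟫ := by
    refine csSup_le (hBne.image _) ?_
    rintro _ ⟨z, hz, rfl⟩
    have hzb : ⟪v, z - b⟫ ≤ 0 := by
      rw [hv_def, real_inner_smul_left]
      exact mul_nonpos_of_nonneg_of_nonpos (inv_nonneg.2 hpos.le) (hobtuse z hz)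
    rw [inner_sub_right] at hzb
    exact sub_nonpos.1 hzb
  have hgap : ⟪v, a⟫ - ⟪v, b⟫ = ‖a - b‖ := by
    rw [← inner_sub_right, real_inner_smul_left, real_inner_self_eq_norm_sq]
    field_simp
  rw [dist_eq_norm]
  linarith [h v hv]

theorem hausdorffDist_eq_sSup_abs_esupp_sub {u : Esp n} {A B : Set (Esp n)}
    (hA : A ∈ cptCvx u) (hB : B ∈ cptCvx u) :
    Metric.hausdorffDist A B = sSup ((fun v => |esupp A v - esupp B v|) '' equator u) := by
  set r := sSup ((fun v => |esupp A v - esupp B v|) '' equator u)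
  have hle : ∀ v ∈ equator u, |esupp A v - esupp B v| ≤ Metric.hausdorffDist A B :=
    fun v hv => abs_esupp_sub_le_hausdorffDist hA.1 hB.1 hA.2.1 hB.2.1 hv.1
  have hbdd : BddAbove ((fun v => |esupp A v - esupp B v|) '' equator u) := by
    refine ⟨Metric.hausdorffDist A B, ?_⟩
    rintro _ ⟨v, hv, rfl⟩
    exact hle v hv
  have hr : ∀ v ∈ equator u, |esupp A v - esupp B v| ≤ r :=
    fun v hv => le_csSup hbdd (Set.mem_image_of_mem _ hv)
  have hr0 : 0 ≤ r := Real.sSup_nonneg (by rintro _ ⟨v, -, rfl⟩; exact abs_nonneg _)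
  refine le_antisymm (Metric.hausdorffDist_le_of_mem_dist hr0 ?_ ?_) ?_
  · refine fun a ha => exists_dist_le_of_inner_le_esupp_add (hA.2.2.2 ha) hB hr0 fun v hv => ?_
    linarith [inner_le_esupp hA.2.1 v ha, (abs_sub_le_iff.1 (hr v hv)).1]
  · refine fun b hb => exists_dist_le_of_inner_le_esupp_add (hB.2.2.2 hb) hA hr0 fun v hv => ?_
    linarith [inner_le_esupp hB.2.1 v hb, (abs_sub_le_iff.1 (hr v hv)).2]
  · exact Real.sSup_le (by rintro _ ⟨v, hv, rfl⟩; exact hle v hv) Metric.hausdorffDist_nonneg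

end SupportFunction

section Gnomonic

variable {n : ℕ}

lemma sign_mul_arccos_div_sqrt_eq_arctan {c s : ℝ} (hc : 0 < c) :
    Real.sign s * Real.arccos (c / √(c ^ 2 + s ^ 2)) = Real.arctan (s / c) := by
  have hd : 0 < √(c ^ 2 + s ^ 2) := Real.sqrt_pos.2 (by positivity)
  have hsq : √(c ^ 2 + s ^ 2) ^ 2 = c ^ 2 + s ^ 2 := Real.sq_sqrt (by positivity)
  have hsin : √(1 - (c / √(c ^ 2 + s ^ 2)) ^ 2) = |s| / √(c ^ 2 + s ^ 2) := by
    have h : 1 - (c / √(c ^ 2 + s ^ 2)) ^ 2 = (|s| / √(c ^ 2 + s ^ 2)) ^ 2 := by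
      rw [div_pow, div_pow, hsq, sq_abs]
      field_simp
      ring
    rw [h, Real.sqrt_sq (by positivity)]
  have habs : Real.arccos (c / √(c ^ 2 + s ^ 2)) = Real.arctan (|s| / c) := by
    rw [Real.arccos_eq_arctan (div_pos hc hd), hsin]
    congr 1
    field_simp
  rcases lt_trichotomy s 0 with hs | rfl | hs
  · rw [habs, Real.sign_of_neg hs, abs_of_neg hs, neg_div, Real.arctan_neg]
    ring
  · simp
  · rw [habs, Real.sign_of_pos hs, abs_of_pos hs, one_mul]

lemma inner_gno_of_inner_eq_zero {u v : Esp n} (hv : ⟪u, v⟫ = 0) (w : Esp n) :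
    ⟪v, gno u w⟫ = ⟪v, w⟫ / ⟪u, w⟫ := by
  rw [gno, inner_sub_right, real_inner_smul_right, real_inner_comm u v, hv, sub_zero,
    div_eq_inv_mul]

lemma continuousOn_gno (u : Esp n) : ContinuousOn (gno u) (openHemi u) :=
  ContinuousOn.sub (ContinuousOn.fun_smul ((continuous_const.inner continuous_id).continuousOn.inv₀
    fun _ (hw : _ ∈ openHemi u) => hw.2.ne') continuousOn_id) continuousOn_const

lemma isCompact_of_mem_properBodies {u : Esp n} {K : Set (Esp n)} (hK : K ∈ properBodies u) :
    IsCompact K := by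
  refine Metric.isCompact_of_isClosed_isBounded hK.2.1
    ((Metric.isBounded_closedBall (x := 0) (r := 1)).subset fun w hw => ?_)
  simp [(hK.2.2.1 hw).1]

lemma isCompact_gno_image {u : Esp n} {K : Set (Esp n)} (hK : K ∈ properBodies u) :
    IsCompact (gno u '' K) :=
  (isCompact_of_mem_properBodies hK).image_of_continuousOn ((continuousOn_gno u).mono hK.2.2.1)

lemma gno_image_eq {u : Esp n} (hu : ‖u‖ = 1) {K : Set (Esp n)} (hK : K ⊆ openHemi u) :
    gno u '' K = hyper u ∩ (fun x => x + u) ⁻¹' radSet K := by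
  have huu : ⟪u, u⟫ = 1 := by rw [real_inner_self_eq_norm_sq, hu, one_pow]
  ext x
  constructor
  · rintro ⟨w, hw, rfl⟩
    have hpos : 0 < ⟪u, w⟫ := (hK hw).2
    refine ⟨?_, ⟪u, w⟫⁻¹, (inv_pos.2 hpos).le, w, hw, by simp [gno]⟩
    rw [hyper, Set.mem_ofPred_eq, gno, inner_sub_right, real_inner_smul_right, huu,
      inv_mul_cancel₀ hpos.ne', sub_self]
  · rintro ⟨hx, l, -, w, hw, hxu⟩
    have hl : l * ⟪u, w⟫ = 1 := by
      have h := congrArg (⟪u, ·⟫) hxu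
      simp only [inner_add_right, real_inner_smul_right, huu] at h
      rw [← h, hx, zero_add]
    refine ⟨w, hw, ?_⟩
    rw [gno, inv_eq_of_mul_eq_one_left hl, ← hxu, add_sub_cancel_right]

lemma gno_image_mem_cptCvx {u : Esp n} (hu : ‖u‖ = 1) {K : Set (Esp n)}
    (hK : K ∈ properBodies u) : gno u '' K ∈ cptCvx u := by
  refine ⟨hK.1.image _, isCompact_gno_image hK, ?_, ?_⟩
  · rw [gno_image_eq hu hK.2.2.1]
    exact (LinearMap.ker (innerₛₗ ℝ u)).convex.inter (hK.2.2.2.translate_preimage_left u)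
  · rw [gno_image_eq hu hK.2.2.1]
    exact Set.inter_subset_left

lemma sphSupp_eq_arctan_esupp_gno_image {u v : Esp n} {K : Set (Esp n)}
    (hK : K ∈ properBodies u) (hv : ⟪u, v⟫ = 0) :
    sphSupp u K v = Real.arctan (esupp (gno u '' K) v) := by
  set g : Esp n → ℝ := fun w => ⟪v, w⟫ / ⟪u, w⟫
  have hsph : (fun w => Real.sign ⟪v, w⟫ *
      Real.arccos (⟪u, w⟫ / √(⟪u, w⟫ ^ 2 + ⟪v, w⟫ ^ 2))) '' K = Real.arctan '' (g '' K) := by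
    rw [← Set.image_comp]
    exact Set.image_congr fun w hw => sign_mul_arccos_div_sqrt_eq_arctan (hK.2.2.1 hw).2
  have hsupp : (fun y => ⟪v, y⟫) '' (gno u '' K) = g '' K := by
    rw [← Set.image_comp]
    exact Set.image_congr fun w _ => inner_gno_of_inner_eq_zero hv w
  have hbdd : BddAbove (g '' K) := by
    rw [← hsupp]
    exact ((isCompact_gno_image hK).image (continuous_const.inner continuous_id)).bddAbove
  rw [sphSupp, hsph, esupp, hsupp, Real.arctan_strictMono.monotone.map_csSup_of_continuousAt
    Real.continuous_arctan.continuousAt (hK.1.image g) hbdd]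

end Gnomonic

theorem stmt7_general {n : ℕ} (u : Esp n) (hu : ‖u‖ = 1)
    (K L : Set (Esp n)) (hK : K ∈ properBodies u) (hL : L ∈ properBodies u) :
    Metric.hausdorffDist (gno u '' K) (gno u '' L) =
      sSup ((fun v => |Real.tan (sphSupp u K v) - Real.tan (sphSupp u L v)|) ''
        equator u) := by
  rw [hausdorffDist_eq_sSup_abs_esupp_sub (gno_image_mem_cptCvx hu hK)
    (gno_image_mem_cptCvx hu hL)]
  congr 1
  refine Set.image_congr fun v hv => ?_
  rw [sphSupp_eq_arctan_esupp_gno_image hK hv.2, sphSupp_eq_arctan_esupp_gno_image hL hv.2,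
    Real.tan_arctan, Real.tan_arctan]

/-- For `K, L ∈ K_u^p(S^n)`, the Euclidean Hausdorff distance of the
gnomonic images satisfies
`δ(g_u(K), g_u(L)) = max_{v ∈ S_u} |tan h_u(K,v) − tan h_u(L,v)|`. -/
theorem stmt7 {n : ℕ} (hn : 2 ≤ n) (u : Esp n) (hu : ‖u‖ = 1)
    (K L : Set (Esp n)) (hK : K ∈ properBodies u) (hL : L ∈ properBodies u) :
    Metric.hausdorffDist (gno u '' K) (gno u '' L) =
      sSup ((fun v => |Real.tan (sphSupp u K v) - Real.tan (sphSupp u L v)|) ''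
        equator u) :=
  stmt7_general u hu K L hK hL
end
end

section
/- Let M ⊆ R^4 be a nonempty closed convex set whose support function satisfies h_M(a,b,c,d) ≤ max{b,d} for all real a,b,c,d with −a ≤ b and −c ≤ d. Then M ⊆ E := {(λ₂, λ₁+λ₂, λ₃, 1−λ₁+λ₃) : λ₁ ∈ [0,1], λ₂ ≤ 0, λ₃ ≤ 0}. -/
open scoped RealInnerProductSpace Pointwise
open Real

noncomputable section

/-!
Each admissible direction `(a, b, c, d)` gives a linear inequality for the points of `M`.
The opposite directions `±(-1, 1, -1, 1)` force `M` into the hyperplane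
`-y₀ + y₁ - y₂ + y₃ = 1`, and the directions `e₀`, `e₂`, `±(e₀ - e₁)` give
`y₀ ≤ 0`, `y₂ ≤ 0` and `0 ≤ y₁ - y₀ ≤ 1`; these are exactly the constraints on
`λ₂ = y₀`, `λ₃ = y₂` and `λ₁ = y₁ - y₀`.
-/

lemma linear_constraints_of_le_max {y : Fin 4 → ℝ}
    (h : ∀ a b c d : ℝ, -a ≤ b → -c ≤ d → a * y 0 + b * y 1 + c * y 2 + d * y 3 ≤ max b d) :
    y 0 ≤ 0 ∧ y 2 ≤ 0 ∧ y 0 ≤ y 1 ∧ y 1 - y 0 ≤ 1 ∧ -y 0 + y 1 - y 2 + y 3 = 1 := by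
  have h₀ := h 1 0 0 0 (by norm_num) (by norm_num)
  have h₂ := h 0 0 1 0 (by norm_num) (by norm_num)
  have h₀₁ := h 1 (-1) 0 0 (by norm_num) (by norm_num)
  have h₁₀ := h (-1) 1 0 0 (by norm_num) (by norm_num)
  have hplane_le := h (-1) 1 (-1) 1 (by norm_num) (by norm_num)
  have hplane_ge := h 1 (-1) 1 (-1) (by norm_num) (by norm_num)
  norm_num at h₀ h₂ h₀₁ h₁₀ hplane_le hplane_ge
  exact ⟨h₀, h₂, by linarith, by linarith, by linarith⟩

lemma exists_params_of_linear_constraints {y : Fin 4 → ℝ} (h₀ : y 0 ≤ 0) (h₂ : y 2 ≤ 0)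
    (h₀₁ : y 0 ≤ y 1) (h₁₀ : y 1 - y 0 ≤ 1) (hplane : -y 0 + y 1 - y 2 + y 3 = 1) :
    ∃ l1 l2 l3 : ℝ, l1 ∈ Set.Icc (0 : ℝ) 1 ∧ l2 ≤ 0 ∧ l3 ≤ 0 ∧
      y 0 = l2 ∧ y 1 = l1 + l2 ∧ y 2 = l3 ∧ y 3 = 1 - l1 + l3 :=
  ⟨y 1 - y 0, y 0, y 2, ⟨sub_nonneg.2 h₀₁, h₁₀⟩, h₀, h₂, rfl, by ring, rfl, by linarith⟩

theorem stmt12_general (M : Set (Fin 4 → ℝ))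
    (h : ∀ a b c d : ℝ, -a ≤ b → -c ≤ d → ∀ y ∈ M,
      a * y 0 + b * y 1 + c * y 2 + d * y 3 ≤ max b d) :
    M ⊆ {y | ∃ l1 l2 l3 : ℝ, l1 ∈ Set.Icc (0 : ℝ) 1 ∧ l2 ≤ 0 ∧ l3 ≤ 0 ∧
      y 0 = l2 ∧ y 1 = l1 + l2 ∧ y 2 = l3 ∧ y 3 = 1 - l1 + l3} := by
  intro y hy
  obtain ⟨h₀, h₂, h₀₁, h₁₀, hplane⟩ :=
    linear_constraints_of_le_max fun a b c d hab hcd => h a b c d hab hcd y hy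
  exact exists_params_of_linear_constraints h₀ h₂ h₀₁ h₁₀ hplane

/-- If `M ⊆ ℝ^4` is nonempty, closed and convex, and its support
function satisfies `h_M(a,b,c,d) ≤ max {b,d}` whenever `−a ≤ b` and `−c ≤ d`, then
`M ⊆ E = {(λ₂, λ₁+λ₂, λ₃, 1−λ₁+λ₃) : λ₁ ∈ [0,1], λ₂ ≤ 0, λ₃ ≤ 0}`. -/
theorem stmt12 (M : Set (Fin 4 → ℝ)) (hne : M.Nonempty) (hcl : IsClosed M)
    (hcv : Convex ℝ M)
    (h : ∀ a b c d : ℝ, -a ≤ b → -c ≤ d → ∀ y ∈ M,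
      a * y 0 + b * y 1 + c * y 2 + d * y 3 ≤ max b d) :
    M ⊆ {y | ∃ l1 l2 l3 : ℝ, l1 ∈ Set.Icc (0 : ℝ) 1 ∧ l2 ≤ 0 ∧ l3 ≤ 0 ∧
      y 0 = l2 ∧ y 1 = l1 + l2 ∧ y 2 = l3 ∧ y 3 = 1 - l1 + l3} :=
  stmt12_general M h
end
end

section
/- The convex set E = {(λ₂, λ₁+λ₂, λ₃, 1−λ₁+λ₃) : λ₁ ∈ [0,1], λ₂ ≤ 0, λ₃ ≤ 0} ⊆ R^4 satisfies h_E(h_{−K}(x), h_K(x), h_{−L}(x), h_L(x)) = h_{conv(K ∪ L)}(x) for all compact convex sets K, L ⊆ R^n and all x ∈ R^n. -/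
open scoped RealInnerProductSpace Pointwise
open Real

noncomputable section

/-- The set `E = {(λ₂, λ₁+λ₂, λ₃, 1−λ₁+λ₃) : λ₁ ∈ [0,1], λ₂ ≤ 0, λ₃ ≤ 0} ⊆ ℝ^4`. -/
def Eset : Set (Fin 4 → ℝ) :=
  {y | ∃ l1 l2 l3 : ℝ, l1 ∈ Set.Icc (0 : ℝ) 1 ∧ l2 ≤ 0 ∧ l3 ≤ 0 ∧
    y = ![l2, l1 + l2, l3, 1 - l1 + l3]}

/-- Euclidean support function of a subset of `ℝ^m`. -/
def es {m : ℕ} (C : Set (EuclideanSpace ℝ (Fin m))) (x : EuclideanSpace ℝ (Fin m)) : ℝ :=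
  sSup ((fun y => ⟪x, y⟫) '' C)

/-!
Both sides equal `max (h_K x) (h_L x)`. A linear functional has the same supremum on
`conv (K ∪ L)` as on `K ∪ L`. On `E` the objective is
`λ₂ (h_{-K} x + h_K x) + λ₃ (h_{-L} x + h_L x) + λ₁ h_K x + (1 - λ₁) h_L x`, and
`h_{-K} x + h_K x ≥ 0` for nonempty `K`, so it is maximised at `λ₂ = λ₃ = 0`, `λ₁ ∈ {0, 1}`.
-/

section SupportFunction

variable {m : ℕ} (x : EuclideanSpace ℝ (Fin m))

lemma IsCompact.bddAbove_inner_image {C : Set (EuclideanSpace ℝ (Fin m))} (hC : IsCompact C) :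
    BddAbove ((fun y => ⟪x, y⟫) '' C) :=
  hC.bddAbove_image (continuous_const.inner continuous_id).continuousOn

lemma inner_le_es {C : Set (EuclideanSpace ℝ (Fin m))} (hC : BddAbove ((fun y => ⟪x, y⟫) '' C))
    {z : EuclideanSpace ℝ (Fin m)} (hz : z ∈ C) : ⟪x, z⟫ ≤ es C x :=
  le_csSup hC ⟨z, hz, rfl⟩

lemma es_neg_add_es_nonneg {C : Set (EuclideanSpace ℝ (Fin m))} (hC : IsCompact C)
    (hne : C.Nonempty) : 0 ≤ es (-C) x + es C x := by
  obtain ⟨z, hz⟩ := hne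
  have hneg : ⟪x, -z⟫ ≤ es (-C) x :=
    inner_le_es x (hC.neg.bddAbove_inner_image x) (Set.neg_mem_neg.mpr hz)
  have hpos : ⟪x, z⟫ ≤ es C x := inner_le_es x (hC.bddAbove_inner_image x) hz
  rw [inner_neg_right] at hneg
  linarith

lemma es_union {K L : Set (EuclideanSpace ℝ (Fin m))} (hKc : IsCompact K) (hK : K.Nonempty)
    (hLc : IsCompact L) (hL : L.Nonempty) : es (K ∪ L) x = max (es K x) (es L x) := by
  rw [es, Set.image_union]
  exact csSup_union (hKc.bddAbove_inner_image x) (hK.image _) (hLc.bddAbove_inner_image x)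
    (hL.image _)

lemma es_convexHull (C : Set (EuclideanSpace ℝ (Fin m))) : es (convexHull ℝ C) x = es C x := by
  refine csSup_eq_csSup_of_forall_exists_le ?_ ?_
  · rintro _ ⟨z, hz, rfl⟩
    obtain ⟨y, hy, hle⟩ :=
      ((innerₛₗ ℝ x).convexOn convex_univ).exists_ge_of_mem_convexHull (Set.subset_univ C) hz
    exact ⟨_, ⟨y, hy, rfl⟩, hle⟩
  · rintro _ ⟨z, hz, rfl⟩
    exact ⟨_, ⟨z, subset_convexHull ℝ C hz, rfl⟩, le_rfl⟩

end SupportFunction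

lemma isGreatest_Eset_image {a b c d : ℝ} (hab : 0 ≤ a + b) (hcd : 0 ≤ c + d) :
    IsGreatest ((fun y => a * y 0 + b * y 1 + c * y 2 + d * y 3) '' Eset) (max b d) := by
  refine ⟨?_, ?_⟩
  · rcases le_total d b with h | h
    · refine ⟨![0, 1, 0, 0], ⟨1, 0, 0, by norm_num⟩, ?_⟩
      simp [max_eq_left h]
    · refine ⟨![0, 0, 0, 1], ⟨0, 0, 0, by norm_num⟩, ?_⟩
      simp [max_eq_right h]
  · rintro _ ⟨_, ⟨l1, l2, l3, ⟨hl1₀, hl1₁⟩, hl2, hl3, rfl⟩, rfl⟩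
    simp only [Matrix.cons_val_zero, Matrix.cons_val_one, Matrix.cons_val_two,
      Matrix.cons_val_three, Matrix.tail_cons, Matrix.head_cons]
    linarith [mul_nonpos_of_nonpos_of_nonneg hl2 hab, mul_nonpos_of_nonpos_of_nonneg hl3 hcd,
      mul_le_mul_of_nonneg_left (le_max_left b d) hl1₀,
      mul_le_mul_of_nonneg_left (le_max_right b d) (sub_nonneg.mpr hl1₁)]

theorem stmt13_general {m : ℕ} (K L : Set (EuclideanSpace ℝ (Fin m)))
    (hK : K.Nonempty) (hKc : IsCompact K)
    (hL : L.Nonempty) (hLc : IsCompact L)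
    (x : EuclideanSpace ℝ (Fin m)) :
    sSup ((fun y => es (-K) x * y 0 + es K x * y 1 + es (-L) x * y 2 + es L x * y 3) ''
        Eset) =
      es (convexHull ℝ (K ∪ L)) x := by
  rw [es_convexHull, es_union x hKc hK hLc hL]
  exact (isGreatest_Eset_image (es_neg_add_es_nonneg x hKc hK)
    (es_neg_add_es_nonneg x hLc hL)).csSup_eq

/-- For all compact convex bodies `K, L ⊆ ℝ^m` and all `x`:
`h_E(h_{−K}(x), h_K(x), h_{−L}(x), h_L(x)) = h_{conv(K ∪ L)}(x)`. -/
theorem stmt13 {m : ℕ} (K L : Set (EuclideanSpace ℝ (Fin m)))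
    (hK : K.Nonempty) (hKc : IsCompact K) (hKv : Convex ℝ K)
    (hL : L.Nonempty) (hLc : IsCompact L) (hLv : Convex ℝ L)
    (x : EuclideanSpace ℝ (Fin m)) :
    sSup ((fun y => es (-K) x * y 0 + es K x * y 1 + es (-L) x * y 2 + es L x * y 3) ''
        Eset) =
      es (convexHull ℝ (K ∪ L)) x :=
  stmt13_general K L hK hKc hL hLc x
end
end
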